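/- The distribution ν on ℕ defined by ν(j) = Σ_{τ : n_τ = j} Π⁺(τ), where the sum ranges over binary excursions with exactly j vertices labelled 0, is a probability distribution (Σ_j ν(j) = 1), and its generating function is given explicitly by: for every z ∈ [0,1], Σ_{j≥0} ν(j) z^j = (−z² + 16z − 3 + √(49−z) · (1−z)^{3/2}) / (2(z+5)). -/

import Mathlib

open scoped BigOperators

namespace VEP

/-- Whether a binary tree is nonempty (a node). -/
def isNode : Tree Unit → Bool
  | BinaryTree.nil => false
  | BinaryTree.node _ _ _ => true

/-- Number of vertices of `t` with label `a`, when the root of `t` carries label `c`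
(labels decrease by 1 to the left child and increase by 1 to the right). -/
def countLabel : ℤ → ℤ → Tree Unit → ℕ
  | _, _, BinaryTree.nil => 0
  | c, a, BinaryTree.node _ l r =>
      (if c = a then 1 else 0) + countLabel (c - 1) a l + countLabel (c + 1) a r

/-- Number of vertices of `t` with label `≥ 1`, root labelled `c`. -/
def countGeOne : ℤ → Tree Unit → ℕ
  | _, BinaryTree.nil => 0
  | c, BinaryTree.node _ l r =>
      (if 1 ≤ c then 1 else 0) + countGeOne (c - 1) l + countGeOne (c + 1) r

/-- Auxiliary predicate for binary excursions: in a tree whose root is labelled `c`,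
all labels are nonnegative and every vertex labelled `0` is a leaf. -/
def excOK : ℤ → Tree Unit → Prop
  | _, BinaryTree.nil => True
  | c, BinaryTree.node _ l r =>
      0 ≤ c ∧ (c = 0 → l = Tree.nil ∧ r = Tree.nil) ∧ excOK (c - 1) l ∧ excOK (c + 1) r

/-- A binary excursion: a nonempty binary tree rooted at label `1`, with nonnegative labels,
whose vertices labelled `0` are leaves. -/
def IsExc (t : Tree Unit) : Prop := t ≠ Tree.nil ∧ excOK 1 t

/-- `n_τ`: number of vertices labelled `0` of a binary excursion. -/
def nZero (t : Tree Unit) : ℕ := countLabel 1 0 t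

/-- `Π⁺(τ) = 4^{-k(τ)}` where `k(τ)` is the number of vertices of `τ` with label `≥ 1`. -/
noncomputable def Piplus (t : Tree Unit) : ℝ := (1 / 4 : ℝ) ^ countGeOne 1 t

/-- `ν(j)`: total `Π⁺`-weight of binary excursions with exactly `j` vertices labelled `0`. -/
noncomputable def nu (j : ℕ) : ℝ :=
  ∑' τ : {t : Tree Unit // IsExc t ∧ nZero t = j}, Piplus τ.1

----------------------------------------------------------------
-- Part A : the generating sums over trees, in ℝ≥0∞
----------------------------------------------------------------

open scoped Classical ENNReal

/-- height of a binary tree -/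
def ht : Tree Unit → ℕ
  | BinaryTree.nil => 0
  | BinaryTree.node _ l r => max (ht l) (ht r) + 1

@[simp] lemma ht_nil : ht Tree.nil = 0 := rfl

lemma ht_node (a : Unit) (l r : Tree Unit) :
    ht (Tree.node a l r) = max (ht l) (ht r) + 1 := rfl

/-- weight of a tree rooted at label `c` -/
noncomputable def W (z : ℝ) (c : ℤ) (t : Tree Unit) : ℝ≥0∞ :=
  (1/4 : ℝ≥0∞) ^ countGeOne c t * (ENNReal.ofReal z) ^ countLabel c 0 t

/-- height-truncated generating sum -/
noncomputable def Fh (z : ℝ) (n : ℕ) (N : ℕ∞) : ℝ≥0∞ :=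
  ∑' t : Tree Unit, if excOK (n : ℤ) t ∧ (ht t : ℕ∞) ≤ N then W z (n : ℤ) t else 0

noncomputable def F (z : ℝ) (n : ℕ) : ℝ≥0∞ := Fh z n ⊤

lemma W_nil (z : ℝ) (c : ℤ) : W z c Tree.nil = 1 := by
  simp [W, countGeOne, countLabel]

lemma excOK_nil (c : ℤ) : excOK c Tree.nil := by trivial

/-- splitting a sum over trees into nil and node parts -/
lemma tsum_tree (g : Tree Unit → ℝ≥0∞) :
    ∑' t, g t = g Tree.nil + ∑' p : Tree Unit × Tree Unit, g (Tree.node () p.1 p.2) := by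
  rw [ENNReal.tsum_eq_add_tsum_ite Tree.nil]
  congr 1
  apply tsum_eq_tsum_of_ne_zero_bij
    (i := fun p => Tree.node () (p.1 : Tree Unit × Tree Unit).1 p.1.2)
  · rintro ⟨⟨a, b⟩, _⟩ ⟨⟨c, d⟩, _⟩ h
    simp only [BinaryTree.node.injEq] at h
    simp [Subtype.ext_iff, Prod.ext_iff, h.2.1, h.2.2]
  · rintro t ht
    rcases t with _ | ⟨⟨⟩, l, r⟩
    · simp at ht
    · refine ⟨⟨(l, r), ?_⟩, rfl⟩
      simpa using ht
  · rintro ⟨⟨a, b⟩, _⟩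
    simp

lemma excOK_node_iff (n : ℕ) (l r : Tree Unit) :
    excOK ((n : ℤ) + 1) (Tree.node () l r) ↔ excOK (n : ℤ) l ∧ excOK ((n : ℤ) + 2) r := by
  have h1 : ((n : ℤ) + 1) - 1 = (n : ℤ) := by ring
  have h2 : ((n : ℤ) + 1) + 1 = (n : ℤ) + 2 := by ring
  have h3 : ((n : ℤ) + 1) ≠ 0 := by omega
  simp [excOK, h1, h2, h3]
  omega

lemma W_node (z : ℝ) (n : ℕ) (l r : Tree Unit) :
    W z ((n : ℤ) + 1) (Tree.node () l r) = (1/4) * W z (n : ℤ) l * W z ((n : ℤ) + 2) r := by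
  have h1 : ((n : ℤ) + 1) - 1 = (n : ℤ) := by ring
  have h2 : ((n : ℤ) + 1) + 1 = (n : ℤ) + 2 := by ring
  have h3 : ¬((n : ℤ) + 1 = 0) := by omega
  have h4 : (1 : ℤ) ≤ (n : ℤ) + 1 := by omega
  simp only [W, countGeOne, countLabel, h1, h2, if_pos h4, if_neg h3]
  rw [pow_add, pow_add, pow_add, pow_add, pow_one, pow_zero]
  ring

lemma ht_node_le (l r : Tree Unit) (N : ℕ∞) :
    ((ht (Tree.node () l r) : ℕ∞) ≤ N + 1) ↔ ((ht l : ℕ∞) ≤ N ∧ (ht r : ℕ∞) ≤ N) := by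
  have : (ht (Tree.node () l r) : ℕ∞) = max ((ht l : ℕ∞)) ((ht r : ℕ∞)) + 1 := by
    rw [ht_node]
    rcases le_total (ht l) (ht r) with h | h
    · rw [max_eq_right h, max_eq_right (by exact_mod_cast h : ((ht l : ℕ∞)) ≤ (ht r : ℕ∞))]
      push_cast; ring
    · rw [max_eq_left h, max_eq_left (by exact_mod_cast h : ((ht r : ℕ∞)) ≤ (ht l : ℕ∞))]
      push_cast; ring
  rw [this, ENat.add_le_add_iff_right (by simp : (1 : ℕ∞) ≠ ⊤), max_le_iff]

lemma tsum_prod_mul (f g : Tree Unit → ℝ≥0∞) (c : ℝ≥0∞) :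
    ∑' p : Tree Unit × Tree Unit, c * f p.1 * g p.2 = c * (∑' t, f t) * (∑' t, g t) := by
  rw [ENNReal.tsum_prod']
  calc ∑' a, ∑' b, c * f a * g b = ∑' a, (c * f a) * ∑' b, g b := by
        exact tsum_congr fun a => by rw [mul_assoc, ENNReal.tsum_mul_left, ← mul_assoc]
    _ = (∑' a, c * f a) * ∑' b, g b := ENNReal.tsum_mul_right
    _ = c * (∑' a, f a) * (∑' b, g b) := by rw [ENNReal.tsum_mul_left]

lemma Fh_succ (z : ℝ) (n : ℕ) (N : ℕ∞) :
    Fh z (n+1) (N+1) = 1 + (1/4) * Fh z n N * Fh z (n+2) N := by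
  unfold Fh
  rw [tsum_tree]
  have hnil : (if excOK ((n+1 : ℕ) : ℤ) Tree.nil ∧ ((ht Tree.nil : ℕ∞)) ≤ N + 1
      then W z ((n+1 : ℕ) : ℤ) Tree.nil else 0) = 1 := by
    rw [if_pos ⟨excOK_nil _, by rw [ht_nil]; exact zero_le⟩, W_nil]
  rw [hnil]
  congr 1
  have key : ∀ p : Tree Unit × Tree Unit,
      (if excOK ((n+1 : ℕ) : ℤ) (Tree.node () p.1 p.2) ∧ ((ht (Tree.node () p.1 p.2) : ℕ∞)) ≤ N + 1
        then W z ((n+1 : ℕ) : ℤ) (Tree.node () p.1 p.2) else 0)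
      = (1/4) * (if excOK (n : ℤ) p.1 ∧ (ht p.1 : ℕ∞) ≤ N then W z (n : ℤ) p.1 else 0)
          * (if excOK ((n+2 : ℕ) : ℤ) p.2 ∧ (ht p.2 : ℕ∞) ≤ N then W z ((n+2 : ℕ) : ℤ) p.2 else 0) := by
    rintro ⟨l, r⟩
    have hcast : ((n+1 : ℕ) : ℤ) = (n : ℤ) + 1 := by push_cast; ring
    have hcast2 : ((n+2 : ℕ) : ℤ) = (n : ℤ) + 2 := by push_cast; ring
    rw [hcast, hcast2]
    by_cases h1 : excOK (n : ℤ) l ∧ (ht l : ℕ∞) ≤ N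
    · by_cases h2 : excOK ((n : ℤ) + 2) r ∧ (ht r : ℕ∞) ≤ N
      · rw [if_pos h1, if_pos h2,
          if_pos ⟨(excOK_node_iff n l r).2 ⟨h1.1, h2.1⟩, (ht_node_le l r N).2 ⟨h1.2, h2.2⟩⟩,
          W_node]
      · rw [if_neg h2, if_neg ?_, mul_zero]
        rintro ⟨he, hh⟩
        exact h2 ⟨((excOK_node_iff n l r).1 he).2, ((ht_node_le l r N).1 hh).2⟩
    · rw [if_neg h1, mul_zero, zero_mul, if_neg ?_]
      rintro ⟨he, hh⟩
      exact h1 ⟨((excOK_node_iff n l r).1 he).1, ((ht_node_le l r N).1 hh).1⟩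
  rw [tsum_congr key]
  exact tsum_prod_mul
    (fun t => if excOK (n : ℤ) t ∧ (ht t : ℕ∞) ≤ N then W z (n : ℤ) t else 0)
    (fun t => if excOK ((n+2 : ℕ) : ℤ) t ∧ (ht t : ℕ∞) ≤ N then W z ((n+2 : ℕ) : ℤ) t else 0)
    (1/4)

lemma F_succ (z : ℝ) (n : ℕ) :
    F z (n+1) = 1 + (1/4) * F z n * F z (n+2) := by
  have : (⊤ : ℕ∞) = ⊤ + 1 := by simp
  rw [F, this, Fh_succ]
  rfl

lemma F_zero (z : ℝ) : F z 0 = 1 + ENNReal.ofReal z := by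
  rw [F, Fh, tsum_tree]
  have hnil : (if excOK ((0:ℕ) : ℤ) Tree.nil ∧ ((ht Tree.nil : ℕ∞)) ≤ ⊤
      then W z ((0:ℕ) : ℤ) Tree.nil else 0) = 1 := by
    rw [if_pos ⟨excOK_nil _, le_top⟩, W_nil]
  rw [hnil]
  congr 1
  have key : ∀ p : Tree Unit × Tree Unit,
      (if excOK ((0:ℕ) : ℤ) (Tree.node () p.1 p.2) ∧ ((ht (Tree.node () p.1 p.2) : ℕ∞)) ≤ ⊤
        then W z ((0:ℕ) : ℤ) (Tree.node () p.1 p.2) else 0)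
      = if p = (Tree.nil, Tree.nil) then ENNReal.ofReal z else 0 := by
    rintro ⟨l, r⟩
    by_cases h : (l, r) = ((Tree.nil : Tree Unit), (Tree.nil : Tree Unit))
    · rw [if_pos h]
      rw [Prod.ext_iff] at h
      simp only at h
      obtain ⟨h1, h2⟩ := h
      subst h1; subst h2
      rw [if_pos ?_]
      · simp [W, countGeOne, countLabel]
      · exact ⟨⟨le_refl 0, fun _ => ⟨rfl, rfl⟩, trivial, trivial⟩, le_top⟩
    · rw [if_neg h, if_neg ?_]
      rintro ⟨he, -⟩
      rcases he with ⟨-, h0, -, -⟩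
      exact h (by rw [Prod.ext_iff]; exact ⟨(h0 rfl).1, (h0 rfl).2⟩)
  rw [tsum_congr key, tsum_ite_eq]

lemma one_le_F (z : ℝ) (n : ℕ) : 1 ≤ F z n := by
  have h := ENNReal.le_tsum (f := fun t => if excOK (n : ℤ) t ∧ ((ht t : ℕ∞)) ≤ (⊤:ℕ∞) then W z (n : ℤ) t else 0) Tree.nil
  rw [if_pos ⟨excOK_nil _, le_top⟩, W_nil] at h
  exact h

lemma Fh_le_two (z : ℝ) (hz0 : 0 ≤ z) (hz1 : z ≤ 1) :
    ∀ N : ℕ, ∀ n : ℕ, Fh z n (N : ℕ∞) ≤ 2 := by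
  intro N
  induction N with
  | zero =>
    intro n
    have key : ∀ t : Tree Unit,
        (if excOK (n : ℤ) t ∧ ((ht t : ℕ∞)) ≤ ((0:ℕ) : ℕ∞) then W z (n : ℤ) t else 0)
        = if t = Tree.nil then 1 else 0 := by
      intro t
      rcases t with _ | ⟨⟨⟩, l, r⟩
      · rw [if_pos ⟨excOK_nil _, by rw [ht_nil]⟩, W_nil, if_pos rfl]
      · rw [if_neg ?_, if_neg (by simp)]
        rintro ⟨-, hh⟩
        rw [show (ht (Tree.node () l r)) = max (ht l) (ht r) + 1 from rfl] at hh
        simp [Nat.cast_add] at hh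
    rw [Fh, tsum_congr key, tsum_ite_eq]
    exact one_le_two
  | succ N ih =>
    intro n
    match n with
    | 0 =>
      have hle : Fh z 0 ((N+1 : ℕ) : ℕ∞) ≤ F z 0 := by
        rw [F]
        apply ENNReal.tsum_le_tsum
        intro t
        by_cases h : excOK ((0:ℕ) : ℤ) t ∧ ((ht t : ℕ∞)) ≤ ((N+1 : ℕ) : ℕ∞)
        · rw [if_pos h, if_pos ⟨h.1, le_top⟩]
        · rw [if_neg h]; exact zero_le
      calc Fh z 0 ((N+1 : ℕ) : ℕ∞) ≤ F z 0 := hle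
        _ = 1 + ENNReal.ofReal z := F_zero z
        _ ≤ 1 + 1 := by
            gcongr
            exact ENNReal.ofReal_le_one.2 hz1
        _ = 2 := by norm_num
    | (m+1) =>
      have hcast : ((N+1 : ℕ) : ℕ∞) = (N : ℕ∞) + 1 := by push_cast; ring
      rw [hcast, Fh_succ]
      calc 1 + (1/4) * Fh z m (N : ℕ∞) * Fh z (m+2) (N : ℕ∞)
          ≤ 1 + (1/4) * 2 * 2 := by gcongr <;> exact ih _
        _ = 2 := by
            have h4 : ((1:ℝ≥0∞)/4) * 2 * 2 = 1 := by
              rw [mul_assoc, show (2:ℝ≥0∞) * 2 = 4 by norm_num, one_div,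
                ENNReal.inv_mul_cancel (by norm_num) (by norm_num)]
            rw [h4]; norm_num
lemma F_le_two (z : ℝ) (hz0 : 0 ≤ z) (hz1 : z ≤ 1) (n : ℕ) : F z n ≤ 2 := by
  rw [F, Fh, ENNReal.tsum_eq_iSup_sum]
  apply iSup_le
  intro s
  set N := s.sup ht with hN
  calc ∑ t ∈ s, (if excOK (n : ℤ) t ∧ ((ht t : ℕ∞)) ≤ (⊤:ℕ∞) then W z (n : ℤ) t else 0)
      ≤ ∑ t ∈ s, (if excOK (n : ℤ) t ∧ ((ht t : ℕ∞)) ≤ (N : ℕ∞) then W z (n : ℤ) t else 0) := by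
        apply Finset.sum_le_sum
        intro t hts
        by_cases h : excOK (n : ℤ) t
        · by_cases h2 : (ht t : ℕ∞) ≤ (N : ℕ∞)
          · rw [if_pos ⟨h, le_top⟩, if_pos ⟨h, h2⟩]
          · exact absurd (by exact_mod_cast Nat.cast_le.2 (Finset.le_sup (f := ht) hts)) h2
        · rw [if_neg (by tauto), if_neg (by tauto)]
    _ ≤ Fh z n (N : ℕ∞) := ENNReal.sum_le_tsum s
    _ ≤ 2 := Fh_le_two z hz0 hz1 N n


----------------------------------------------------------------
-- Part B : uniqueness of the bounded solution of the recursion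
----------------------------------------------------------------

open Filter Topology

lemma seq_key (u : ℕ → ℝ) (hrec : ∀ k, u (k+2) * (1 - u k) = 2 * u (k+1) - u k)
    (h0 : ∀ c, 0 ≤ u c) (h2 : ∀ c, u c ≤ 1/2) :
    u 1 ≤ u 0 ∧ u 0 * u 1 * (u 0 + u 1) - 3 * (u 0 - u 1)^2 = 0 := by
  have hδ : ∀ k, u (k+2) - u (k+1) = (u (k+1) - u k) + u k * u (k+2) := by
    intro k; linear_combination hrec k
  have hmono' : ∀ k, u (k+1) - u k ≤ u (k+2) - u (k+1) := by
    intro k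
    have := mul_nonneg (h0 k) (h0 (k+2))
    linarith [hδ k]
  have hdec : ∀ k, u (k+1) ≤ u k := by
    by_contra hcon
    push_neg at hcon
    obtain ⟨k0, hk0⟩ := hcon
    set d := u (k0+1) - u k0 with hd
    have hdpos : 0 < d := by simp only [hd]; linarith
    have hstep : ∀ m, d ≤ u (k0 + m + 1) - u (k0 + m) := by
      intro m
      induction m with
      | zero => simp [hd]
      | succ m ih =>
        have h1 := hmono' (k0 + m)
        have e1 : k0 + (m+1) + 1 = k0 + m + 2 := by ring
        have e2 : k0 + (m+1) = k0 + m + 1 := by ring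
        rw [e1, e2]
        linarith
    have grow : ∀ m : ℕ, u k0 + m * d ≤ u (k0 + m) := by
      intro m
      induction m with
      | zero => simp
      | succ m ih =>
        have h1 := hstep m
        have e2 : k0 + (m+1) = k0 + m + 1 := by ring
        rw [e2]
        push_cast
        linarith
    obtain ⟨m, hm⟩ := exists_nat_gt ((1/2 - u k0) / d)
    have h1 := grow m
    have h2' := h2 (k0 + m)
    have h3 : 1/2 - u k0 < m * d := by
      rw [div_lt_iff₀ hdpos] at hm
      linarith
    nlinarith [h1, h2', h3]
  have hAnti : Antitone u := antitone_nat_of_succ_le hdec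
  have hbdd : BddBelow (Set.range u) := ⟨0, by rintro x ⟨c, rfl⟩; exact h0 c⟩
  set L := ⨅ c, u c with hL
  have hLnonneg : 0 ≤ L := le_ciInf h0
  have hLle : ∀ c, L ≤ u c := fun c => ciInf_le hbdd c
  have hL0 : L = 0 := by
    by_contra hne
    have hLpos : 0 < L := lt_of_le_of_ne hLnonneg (Ne.symm hne)
    have hgrow : ∀ c : ℕ, (u 1 - u 0) + c * L^2 ≤ u (c+1) - u c := by
      intro c
      induction c with
      | zero => simp
      | succ c ih =>
        have h1 := hδ c
        have hmul : L * L ≤ u c * u (c+2) :=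
          mul_le_mul (hLle c) (hLle (c+2)) hLnonneg (h0 c)
        push_cast
        nlinarith
    obtain ⟨c, hc⟩ := exists_nat_gt ((1 - (u 1 - u 0)) / L^2)
    have h1 := hgrow c
    have h2' := hdec (c+1)
    have h2'' := hdec c
    have hLL : 0 < L^2 := by positivity
    have h3 : 1 - (u 1 - u 0) < c * L^2 := by
      rw [div_lt_iff₀ hLL] at hc
      linarith
    have h4 := h0 0
    have h5 := h2 0
    linarith [hdec c]
  have hu0 : Tendsto u atTop (𝓝 0) := by
    have := tendsto_atTop_ciInf hAnti hbdd
    rwa [← hL, hL0] at this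
  have hu1 : Tendsto (fun c => u (c+1)) atTop (𝓝 0) := hu0.comp (tendsto_add_atTop_nat 1)
  have hpos : ∀ c, (0:ℝ) < (1 - u c) := fun c => by linarith [h2 c]
  have hval : ∀ c, (u c * u (c+1) * (u c + u (c+1)) - 3*(u c - u (c+1))^2)
        / ((1 - u c) * (1 - u (c+1)))
      = (u 0 * u 1 * (u 0 + u 1) - 3*(u 0 - u 1)^2) / ((1 - u 0) * (1 - u 1)) := by
    intro c
    induction c with
    | zero => rfl
    | succ c ih =>
      rw [← ih, div_eq_div_iff (mul_pos (hpos (c+1)) (hpos (c+2))).ne' (mul_pos (hpos c) (hpos (c+1))).ne']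
      linear_combination ((1 - u (c+1)) * (3 - u (c+1)) * (u c - u (c+2))) * hrec c
  have hKt : Tendsto (fun c => (u c * u (c+1) * (u c + u (c+1)) - 3*(u c - u (c+1))^2)
        / ((1 - u c) * (1 - u (c+1)))) atTop (𝓝 0) := by
    have hnum : Tendsto (fun c => u c * u (c+1) * (u c + u (c+1)) - 3*(u c - u (c+1))^2)
        atTop (𝓝 0) := by
      have := ((hu0.mul hu1).mul (hu0.add hu1)).sub
        ((tendsto_const_nhds (x := (3:ℝ))).mul ((hu0.sub hu1).pow 2))
      simpa using this
    have hden : Tendsto (fun c => (1 - u c) * (1 - u (c+1))) atTop (𝓝 1) := by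
      have := ((tendsto_const_nhds (x := (1:ℝ))).sub hu0).mul
        ((tendsto_const_nhds (x := (1:ℝ))).sub hu1)
      simpa using this
    have := hnum.div hden one_ne_zero
    rw [zero_div] at this
    exact this
  have hconst : (u 0 * u 1 * (u 0 + u 1) - 3*(u 0 - u 1)^2) / ((1 - u 0) * (1 - u 1)) = 0 := by
    have h1 : Tendsto (fun _ : ℕ => (u 0 * u 1 * (u 0 + u 1) - 3*(u 0 - u 1)^2)
        / ((1 - u 0) * (1 - u 1))) atTop
        (𝓝 ((u 0 * u 1 * (u 0 + u 1) - 3*(u 0 - u 1)^2) / ((1 - u 0) * (1 - u 1)))) :=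
      tendsto_const_nhds
    have h2t : Tendsto (fun _ : ℕ => (u 0 * u 1 * (u 0 + u 1) - 3*(u 0 - u 1)^2)
        / ((1 - u 0) * (1 - u 1))) atTop (𝓝 0) := hKt.congr hval
    exact tendsto_nhds_unique h1 h2t
  refine ⟨hdec 0, ?_⟩
  have hd0 : ((1 - u 0) * (1 - u 1)) ≠ 0 := (mul_pos (hpos 0) (hpos 1)).ne' 
  exact (div_eq_zero_iff.1 hconst).resolve_right hd0


----------------------------------------------------------------
-- linking `nu` with `F`
----------------------------------------------------------------

noncomputable def NuZ (z : ℝ) (j : ℕ) : ℝ≥0∞ :=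
  ∑' t : Tree Unit, if IsExc t ∧ nZero t = j then W z 1 t else 0

lemma F_one_eq (z : ℝ) : F z 1 = ∑' t : Tree Unit, if excOK 1 t then W z 1 t else 0 := by
  rw [F, Fh]
  apply tsum_congr
  intro t
  simp only [le_top, and_true, Nat.cast_one]

lemma NuZ_le (z : ℝ) (j : ℕ) : NuZ z j ≤ F z 1 := by
  rw [F_one_eq]
  apply ENNReal.tsum_le_tsum
  intro t
  by_cases h : IsExc t ∧ nZero t = j
  · rw [if_pos h, if_pos h.1.2]
  · rw [if_neg h]; exact zero_le

lemma one_add_sum_NuZ (z : ℝ) : 1 + ∑' j, NuZ z j = F z 1 := by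
  rw [F_one_eq, ENNReal.tsum_eq_add_tsum_ite Tree.nil,
    if_pos (excOK_nil (1 : ℤ)), W_nil]
  congr 1
  calc ∑' j, NuZ z j
      = ∑' (j : ℕ) (t : Tree Unit), if IsExc t ∧ nZero t = j then W z 1 t else 0 := rfl
    _ = ∑' (t : Tree Unit) (j : ℕ), if IsExc t ∧ nZero t = j then W z 1 t else 0 :=
        ENNReal.tsum_comm
    _ = ∑' t : Tree Unit, if IsExc t then W z 1 t else 0 := by
        apply tsum_congr
        intro t
        by_cases hI : IsExc t
        · rw [if_pos hI]
          rw [tsum_eq_single (nZero t) ?_]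
          · rw [if_pos ⟨hI, rfl⟩]
          · intro j hj
            rw [if_neg]
            rintro ⟨-, h⟩
            exact hj h.symm
        · simp [hI]
    _ = ∑' t : Tree Unit, if t = Tree.nil then 0
          else if excOK 1 t then W z 1 t else 0 := by
        apply tsum_congr
        intro t
        by_cases hn : t = Tree.nil
        · rw [if_pos hn, if_neg (fun hI : IsExc t => hI.1 hn)]
        · rw [if_neg hn]
          by_cases he : excOK 1 t
          · rw [if_pos ⟨hn, he⟩, if_pos he]
          · rw [if_neg (fun hI : IsExc t => he hI.2), if_neg he]
  apply tsum_congr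
  intro t
  congr 1

lemma quarter_ne_top : (1/4 : ℝ≥0∞) ≠ ⊤ := by
  simp [ENNReal.div_eq_inv_mul]

lemma NuZ_eq (z : ℝ) (j : ℕ) :
    NuZ z j = (∑' τ : {t : Tree Unit // IsExc t ∧ nZero t = j},
        (1/4 : ℝ≥0∞) ^ countGeOne 1 τ.1) * (ENNReal.ofReal z) ^ j := by
  calc NuZ z j
      = ∑' t : Tree Unit, Set.indicator {t : Tree Unit | IsExc t ∧ nZero t = j}
          (fun t => (1/4 : ℝ≥0∞) ^ countGeOne 1 t * (ENNReal.ofReal z) ^ j) t := by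
        apply tsum_congr
        intro t
        by_cases h : IsExc t ∧ nZero t = j
        · rw [if_pos h, Set.indicator_of_mem (by exact h)]
          rw [W, show countLabel 1 0 t = j from h.2]
        · rw [if_neg h, Set.indicator_of_notMem (by exact h)]
    _ = ∑' τ : ↥{t : Tree Unit | IsExc t ∧ nZero t = j},
          ((1/4 : ℝ≥0∞) ^ countGeOne 1 τ.1 * (ENNReal.ofReal z) ^ j) :=
        (tsum_subtype _ _).symm
    _ = (∑' τ : {t : Tree Unit // IsExc t ∧ nZero t = j},
        (1/4 : ℝ≥0∞) ^ countGeOne 1 τ.1) * (ENNReal.ofReal z) ^ j := by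
        rw [ENNReal.tsum_mul_right]
        rfl

lemma nu_eq_toReal (j : ℕ) :
    nu j = (∑' τ : {t : Tree Unit // IsExc t ∧ nZero t = j},
        (1/4 : ℝ≥0∞) ^ countGeOne 1 τ.1).toReal := by
  rw [ENNReal.tsum_toReal_eq (fun τ => ENNReal.pow_ne_top quarter_ne_top)]
  apply tsum_congr
  intro τ
  rw [Piplus, ENNReal.toReal_pow]
  congr 1
  simp [ENNReal.toReal_div]

lemma gen_eq_F (z : ℝ) (hz0 : 0 ≤ z) (hz1 : z ≤ 1) :
    ∑' j : ℕ, nu j * z ^ j = (F z 1).toReal - 1 := by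
  have two_ne : (2 : ℝ≥0∞) ≠ ⊤ := by norm_num
  have hNuZ_ne : ∀ j, NuZ z j ≠ ⊤ := fun j =>
    ne_top_of_le_ne_top two_ne (le_trans (NuZ_le z j) (F_le_two z hz0 hz1 1))
  have hterm : ∀ j, nu j * z ^ j = (NuZ z j).toReal := by
    intro j
    rw [nu_eq_toReal, NuZ_eq z j, ENNReal.toReal_mul, ENNReal.toReal_pow,
      ENNReal.toReal_ofReal hz0]
  have hsum : 1 + ∑' j, NuZ z j = F z 1 := one_add_sum_NuZ z
  have hSne : (∑' j, NuZ z j) ≠ ⊤ := by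
    refine ne_top_of_le_ne_top two_ne (le_trans ?_ (F_le_two z hz0 hz1 1))
    rw [← hsum]
    exact le_add_self
  have := congrArg ENNReal.toReal hsum
  rw [ENNReal.toReal_add (by norm_num) hSne, ENNReal.toReal_one] at this
  calc ∑' j, nu j * z^j = ∑' j, (NuZ z j).toReal := tsum_congr hterm
    _ = (∑' j, NuZ z j).toReal := (ENNReal.tsum_toReal_eq hNuZ_ne).symm
    _ = (F z 1).toReal - 1 := by linarith

----------------------------------------------------------------
-- real versions of the recursion and bounds
----------------------------------------------------------------

lemma F_ne_top (z : ℝ) (hz0 : 0 ≤ z) (hz1 : z ≤ 1) (n : ℕ) : F z n ≠ ⊤ :=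
  ne_top_of_le_ne_top (by norm_num) (F_le_two z hz0 hz1 n)

lemma phi_rec (z : ℝ) (hz0 : 0 ≤ z) (hz1 : z ≤ 1) (n : ℕ) :
    (F z (n+1)).toReal = 1 + 1/4 * (F z n).toReal * (F z (n+2)).toReal := by
  rw [F_succ]
  rw [ENNReal.toReal_add (by norm_num)
      (ENNReal.mul_ne_top (ENNReal.mul_ne_top quarter_ne_top (F_ne_top z hz0 hz1 n))
        (F_ne_top z hz0 hz1 (n+2))),
    ENNReal.toReal_mul, ENNReal.toReal_mul, ENNReal.toReal_one]
  norm_num [ENNReal.toReal_div]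

lemma phi_le_two (z : ℝ) (hz0 : 0 ≤ z) (hz1 : z ≤ 1) (n : ℕ) : (F z n).toReal ≤ 2 := by
  have := ENNReal.toReal_mono (by norm_num : (2:ℝ≥0∞) ≠ ⊤) (F_le_two z hz0 hz1 n)
  simpa using this

lemma one_le_phi (z : ℝ) (hz0 : 0 ≤ z) (hz1 : z ≤ 1) (n : ℕ) : 1 ≤ (F z n).toReal := by
  have := ENNReal.toReal_mono (F_ne_top z hz0 hz1 n) (one_le_F z n)
  simpa using this

lemma phi_zero (z : ℝ) (hz0 : 0 ≤ z) : (F z 0).toReal = 1 + z := by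
  rw [F_zero, ENNReal.toReal_add (by norm_num) ENNReal.ofReal_ne_top,
    ENNReal.toReal_one, ENNReal.toReal_ofReal hz0]

----------------------------------------------------------------
-- the main computation
----------------------------------------------------------------

open Real in
lemma gen_formula (z : ℝ) (hz0 : 0 ≤ z) (hz1 : z ≤ 1) :
    ∑' j : ℕ, nu j * z ^ j
      = (-z ^ 2 + 16 * z - 3 + Real.sqrt (49 - z) * (1 - z) ^ ((3 : ℝ) / 2))
          / (2 * (z + 5)) := by
  set u : ℕ → ℝ := fun n => 1 - (F z n).toReal / 2 with hu
  have hrec : ∀ k, u (k+2) * (1 - u k) = 2 * u (k+1) - u k := by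
    intro k
    simp only [hu]
    linear_combination phi_rec z hz0 hz1 k
  have hub : ∀ c, 0 ≤ u c := fun c => by
    simp only [hu]; linarith [phi_le_two z hz0 hz1 c]
  have hub2 : ∀ c, u c ≤ 1/2 := fun c => by
    simp only [hu]; linarith [one_le_phi z hz0 hz1 c]
  obtain ⟨hle, hK⟩ := seq_key u hrec hub hub2
  have hu0 : u 0 = (1 - z) / 2 := by
    simp only [hu]; rw [phi_zero z hz0]; ring
  rw [hu0] at hle hK
  rw [gen_eq_F z hz0 hz1]
  have hφ1u : (F z 1).toReal = 2 - 2 * u 1 := by simp only [hu]; ring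
  rw [hφ1u]
  rcases eq_or_lt_of_le hz1 with hz1' | hz1'
  · -- z = 1
    have hu1 : u 1 = 0 := le_antisymm (by rw [hz1'] at hle; simpa using hle) (hub 1)
    rw [hu1, hz1']
    rw [show (1:ℝ) - 1 = 0 by norm_num, Real.zero_rpow (by norm_num : ((3:ℝ)/2) ≠ 0)]
    norm_num
  · -- z < 1
    have h1z : 0 < 1 - z := by linarith
    have h49 : 0 < 49 - z := by linarith
    set Q := Real.sqrt (1 - z) with hQdef
    set P := Real.sqrt (49 - z) with hPdef
    have hQpos : 0 < Q := Real.sqrt_pos.2 h1z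
    have hPpos : 0 < P := Real.sqrt_pos.2 h49
    have hQ2 : Q^2 = 1 - z := Real.sq_sqrt h1z.le
    have hP2 : P^2 = 49 - z := Real.sq_sqrt h49.le
    set D := 13 - z + P*Q with hDdef
    have hDpos : 0 < D := by nlinarith [mul_pos hPpos hQpos]
    set v1 := 6*(1-z)/D with hv1def
    have hR1 : v1 * D = 6*(1-z) := div_mul_cancel₀ _ hDpos.ne'
    have hw : (P*Q)^2 = (49-z)*(1-z) := by rw [mul_pow, hP2, hQ2]
    have hKv : ((1-z)/2) * v1 * ((1-z)/2 + v1) - 3*((1-z)/2 - v1)^2 = 0 := by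
      have hmul : (((1-z)/2) * v1 * ((1-z)/2 + v1) - 3*((1-z)/2 - v1)^2) * D^2 = 0 := by
        linear_combination (109/4 - 65/2*v1 + 13/4*(P*Q) - 5/2*(P*Q)*v1 - 147/4*z - 4*z*v1
          - 7/2*z*(P*Q) - 1/2*z*(P*Q)*v1 + 39/4*z^2 + 1/2*z^2*v1 + 1/4*z^2*(P*Q)
          - 1/4*z^3) * hR1 + (-3/4 + 3/2*z - 3/4*z^2) * hw
      rcases mul_eq_zero.1 hmul with h | h
      · exact h
      · exact absurd h (pow_ne_zero 2 hDpos.ne')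
    have hv1nonneg : 0 ≤ v1 := div_nonneg (by linarith) hDpos.le
    have hv1le : v1 ≤ (1-z)/2 := by
      rw [hv1def, div_le_div_iff₀ hDpos two_pos]
      nlinarith [mul_pos hPpos hQpos]
    have hfac : (u 1 - v1) * (((1-z)/2)^2 + 6*((1-z)/2) + ((1-z)/2 - 3)*(u 1 + v1)) = 0 := by
      linear_combination hK - hKv
    have hfacpos : 0 < ((1-z)/2)^2 + 6*((1-z)/2) + ((1-z)/2 - 3)*(u 1 + v1) := by
      nlinarith [hle, hv1le, hub 1, hv1nonneg]
    have huv : u 1 = v1 := by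
      rcases mul_eq_zero.1 hfac with h | h
      · linarith
      · exact absurd h hfacpos.ne'
    rw [huv]
    have h32 : (1 - z) ^ ((3:ℝ)/2) = Q^3 := by
      rw [show ((3:ℝ)/2) = (1/2) * 3 by norm_num, Real.rpow_mul h1z.le,
        ← Real.sqrt_eq_rpow, ← hQdef,
        show ((3:ℝ)) = ((3:ℕ):ℝ) by norm_num, Real.rpow_natCast]
    rw [h32]
    have hQ3 : P * Q^3 = (P*Q)*(1-z) := by
      rw [pow_succ, ← hQ2]; ring
    rw [hQ3]
    have h2z5 : (0:ℝ) < 2*(z+5) := by linarith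
    rw [eq_div_iff h2z5.ne']
    have hGD : ((2 - 2*v1 - 1) * (2*(z+5)) - (-z^2+16*z-3+(P*Q)*(1-z))) * D = 0 := by
      linear_combination (-20 - 4*z) * hR1 + (-1 + z) * hw
    rcases mul_eq_zero.1 hGD with h | h
    · linarith
    · exact absurd h hDpos.ne'


/-- `ν` is a probability distribution on `ℕ` and its generating function is explicit. -/
theorem nu_prob_and_generating_function :
    (∑' j : ℕ, nu j) = 1 ∧
    ∀ z ∈ Set.Icc (0 : ℝ) 1,
      ∑' j : ℕ, nu j * z ^ j
        = (-z ^ 2 + 16 * z - 3 + Real.sqrt (49 - z) * (1 - z) ^ ((3 : ℝ) / 2))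
            / (2 * (z + 5)) := by
  constructor
  · have h1 := gen_formula 1 zero_le_one le_rfl
    simp only [one_pow, mul_one] at h1
    rw [h1, show (1:ℝ) - 1 = 0 by norm_num,
      Real.zero_rpow (by norm_num : ((3:ℝ)/2) ≠ 0)]
    norm_num
  · intro z hz
    exact gen_formula z hz.1 hz.2

end VEP
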